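/- For all integers k ≥ 2, n ≥ 1, p ≥ 0, r ≥ 0, there is a surjective group homomorphism from G(k,n,p,r) onto (ℤ/pℤ) × (ℤ/rℤ) sending the image of c₂ to (1,0), the image of d₂ to (0,1), and the images of all other generators to (0,0). (Surjectivity half of the isomorphism in Lemma 3.3.) -/

import Mathlib

/-- Generators of the presentation: `a1, b1, a2, b2`, the tilde generators
`ct = c̃`, `dt = d̃`, and `c i`, `d i` for `i : Fin k`, where `c i` denotes
`c_{i+1}` (so `c ⟨0,_⟩ = c₁`, `c ⟨1,_⟩ = c₂`, …). -/
inductive Gen (k : ℕ) : Type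
  | a1 | b1 | a2 | b2 | ct | dt
  | c : Fin k → Gen k
  | d : Fin k → Gen k

namespace Gen

variable (k : ℕ)

def A1 : FreeGroup (Gen k) := FreeGroup.of Gen.a1
def B1 : FreeGroup (Gen k) := FreeGroup.of Gen.b1
def A2 : FreeGroup (Gen k) := FreeGroup.of Gen.a2
def B2 : FreeGroup (Gen k) := FreeGroup.of Gen.b2
def Ct : FreeGroup (Gen k) := FreeGroup.of Gen.ct
def Dt : FreeGroup (Gen k) := FreeGroup.of Gen.dt
def C (i : Fin k) : FreeGroup (Gen k) := FreeGroup.of (Gen.c i)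
def D (i : Fin k) : FreeGroup (Gen k) := FreeGroup.of (Gen.d i)

end Gen

open scoped commutatorElement in
open Gen in
/-- The relators of the presentation of `π₁(M)` from Lemma 3.2 (a relation
`w = v` is encoded as the relator `w * v⁻¹`). -/
def rels (k n p r : ℕ) : Set (FreeGroup (Gen k)) :=
  { x |
    -- a₂ = c̃⁻¹ a₁ c̃
    x = A2 k * ((Ct k)⁻¹ * A1 k * Ct k)⁻¹ ∨
    -- b₂ = c̃⁻¹ b₁ c̃
    x = B2 k * ((Ct k)⁻¹ * B1 k * Ct k)⁻¹ ∨
    -- b₁ = c̃⁻¹ b₂ c̃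
    x = B1 k * ((Ct k)⁻¹ * B2 k * Ct k)⁻¹ ∨
    -- [b₂, d̃] = 1
    x = ⁅B2 k, Dt k⁆ ∨
    -- [a₁⁻¹ b₁⁻¹ a₂, d̃] = 1
    x = ⁅(A1 k)⁻¹ * (B1 k)⁻¹ * A2 k, Dt k⁆ ∨
    -- [a₂⁻¹ b₂⁻¹ a₁, d̃] = 1
    x = ⁅(A2 k)⁻¹ * (B2 k)⁻¹ * A1 k, Dt k⁆ ∨
    -- c̃⁻¹ a₁ a₂ c̃ a₁⁻¹ a₂⁻¹ = d̃
    x = (Ct k)⁻¹ * A1 k * A2 k * Ct k * (A1 k)⁻¹ * (A2 k)⁻¹ * (Dt k)⁻¹ ∨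
    -- [a₁, d̃⁻¹] = c̃
    x = ⁅A1 k, (Dt k)⁻¹⁆ * (Ct k)⁻¹ ∨
    -- [b₁, d̃] = 1
    x = ⁅B1 k, Dt k⁆ ∨
    -- [a₁, b₁][a₂, b₂] = 1
    x = ⁅A1 k, B1 k⁆ * ⁅A2 k, B2 k⁆ ∨
    -- [c₁,d₁][c₂,d₂]⋯[c_k,d_k][c̃,d̃] = 1
    x = (List.ofFn fun i : Fin k => ⁅C k i, D k i⁆).prod * ⁅Ct k, Dt k⁆ ∨
    -- relations involving c₁, d₁  (index 0)
    (∃ i : Fin k, (i : ℕ) = 0 ∧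
      (x = ⁅(B1 k)⁻¹, (D k i)⁻¹⁆ * (A1 k)⁻¹ ∨      -- [b₁⁻¹,d₁⁻¹] = a₁
       x = ⁅(A1 k)⁻¹, D k i⁆ * (B1 k)⁻¹ ∨           -- [a₁⁻¹,d₁] = b₁
       x = ⁅(B2 k)⁻¹, (D k i)⁻¹⁆ * (C k i)⁻¹ ∨      -- [b₂⁻¹,d₁⁻¹] = c₁
       x = ⁅B2 k, (C k i)⁻¹⁆ ^ n * (D k i)⁻¹ ∨      -- [b₂,c₁⁻¹]ⁿ = d₁
       x = ⁅A1 k, C k i⁆ ∨ x = ⁅B1 k, C k i⁆ ∨      -- [a₁,c₁] = [b₁,c₁] = 1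
       x = ⁅A2 k, C k i⁆ ∨ x = ⁅A2 k, D k i⁆)) ∨    -- [a₂,c₁] = [a₂,d₁] = 1
    -- relations involving c₂, d₂  (index 1)
    (∃ i : Fin k, (i : ℕ) = 1 ∧
      (x = ⁅(B2 k)⁻¹, (D k i)⁻¹⁆ * ((C k i) ^ p)⁻¹ ∨  -- [b₂⁻¹,d₂⁻¹] = c₂ᵖ
       x = ⁅B2 k, (C k i)⁻¹⁆ * ((D k i) ^ r)⁻¹)) ∨    -- [b₂,c₂⁻¹] = d₂ʳ
    -- relations [b₂⁻¹,d_i⁻¹] = c_i, [b₂,c_i⁻¹] = d_i for 3 ≤ i ≤ k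
    (∃ i : Fin k, 2 ≤ (i : ℕ) ∧
      (x = ⁅(B2 k)⁻¹, (D k i)⁻¹⁆ * (C k i)⁻¹ ∨
       x = ⁅B2 k, (C k i)⁻¹⁆ * (D k i)⁻¹)) ∨
    -- commuting relations for 2 ≤ i ≤ k
    (∃ i : Fin k, 1 ≤ (i : ℕ) ∧
      (x = ⁅A2 k, C k i⁆ ∨ x = ⁅A2 k, D k i⁆ ∨
       x = ⁅A1 k, C k i⁆ ∨ x = ⁅B1 k, D k i⁆ ∨
       x = ⁅A1 k, D k i⁆ ∨ x = ⁅B1 k, C k i⁆)) }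

/-- The group `G(k,n,p,r)` of Lemma 3.2/3.3: the fundamental group of the
surgered manifold, given by the above presentation. -/
abbrev G (k n p r : ℕ) : Type := PresentedGroup (rels k n p r)

/-- The image in `G k n p r` of a generator. -/
abbrev gen (k n p r : ℕ) (g : Gen k) : G k n p r := PresentedGroup.of g

/-!
Once its commutators are deleted, each relator of the presentation is a word in the generators
other than `c₂, d₂` and in the powers `c₂ᵖ, d₂ʳ`. Sending `c₂ ↦ (1,0)`, `d₂ ↦ (0,1)` and every
other generator to `0` therefore defines a homomorphism to the abelian group `ℤ/p × ℤ/r`, and it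
is onto because `(1,0)` and `(0,1)` generate that group.
-/

open scoped commutatorElement

theorem ZMod.prod_eq_intCast_smul_add (p r : ℕ) (z : ZMod p × ZMod r) :
    ∃ m l : ℤ, m • ((1 : ZMod p), (0 : ZMod r)) + l • ((0 : ZMod p), (1 : ZMod r)) = z := by
  obtain ⟨m, hm⟩ := ZMod.intCast_surjective z.1
  obtain ⟨l, hl⟩ := ZMod.intCast_surjective z.2
  exact ⟨m, l, Prod.ext (by simp [hm]) (by simp [hl])⟩

theorem MonoidHom.surjective_of_map_eq_ofAdd_one_zero_of_map_eq_ofAdd_zero_one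
    {H : Type*} [Group H] {p r : ℕ} (f : H →* Multiplicative (ZMod p × ZMod r)) {x y : H}
    (hx : f x = Multiplicative.ofAdd (1, 0)) (hy : f y = Multiplicative.ofAdd (0, 1)) :
    Function.Surjective f := by
  intro z
  obtain ⟨m, l, hz⟩ := ZMod.prod_eq_intCast_smul_add p r z.toAdd
  refine ⟨x ^ m * y ^ l, ?_⟩
  rw [map_mul, map_zpow, map_zpow, hx, hy, ← ofAdd_zsmul, ← ofAdd_zsmul, ← ofAdd_add, hz]
  rfl

theorem MonoidHom.map_commutatorElement_eq_one {H K : Type*} [Group H] [CommGroup K]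
    (f : H →* K) (u v : H) : f ⁅u, v⁆ = 1 := by
  rw [map_commutatorElement, commutatorElement_eq_one_iff_commute]
  exact Commute.all _ _

namespace Gen

variable {k : ℕ} (p r : ℕ)

def toZModProd : Gen k → Multiplicative (ZMod p × ZMod r)
  | c i => if (i : ℕ) = 1 then Multiplicative.ofAdd (1, 0) else 1
  | d i => if (i : ℕ) = 1 then Multiplicative.ofAdd (0, 1) else 1
  | _ => 1

theorem toZModProd_c_pow (i : Fin k) : toZModProd p r (c i) ^ p = 1 := by
  dsimp only [toZModProd]
  split_ifs
  · rw [← ofAdd_nsmul]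
    simp [Prod.smul_mk, nsmul_eq_mul]
  · exact one_pow p

theorem toZModProd_d_pow (i : Fin k) : toZModProd p r (d i) ^ r = 1 := by
  dsimp only [toZModProd]
  split_ifs
  · rw [← ofAdd_nsmul]
    simp [Prod.smul_mk, nsmul_eq_mul]
  · exact one_pow r

theorem lift_toZModProd_eq_one_of_mem_rels (n : ℕ) {x : FreeGroup (Gen k)}
    (hx : x ∈ rels k n p r) : FreeGroup.lift (toZModProd p r) x = 1 := by
  set φ := FreeGroup.lift (toZModProd p r)
  have hcomm : ∀ u v, φ ⁅u, v⁆ = 1 := φ.map_commutatorElement_eq_one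
  have hc : ∀ i : Fin k, (i : ℕ) ≠ 1 → φ (C k i) = 1 := fun i hi => by
    simp [φ, C, toZModProd, hi]
  have hd : ∀ i : Fin k, (i : ℕ) ≠ 1 → φ (D k i) = 1 := fun i hi => by
    simp [φ, D, toZModProd, hi]
  have hcp : ∀ i, φ (C k i) ^ p = 1 := fun i => by
    simpa [φ, C] using toZModProd_c_pow p r i
  have hdr : ∀ i, φ (D k i) ^ r = 1 := fun i => by
    simpa [φ, D] using toZModProd_d_pow p r i
  have hrest : φ (A1 k) = 1 ∧ φ (B1 k) = 1 ∧ φ (A2 k) = 1 ∧ φ (B2 k) = 1 ∧ φ (Ct k) = 1 ∧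
      φ (Dt k) = 1 := by
    simp [φ, A1, B1, A2, B2, Ct, Dt, toZModProd]
  obtain ⟨ha1, hb1, ha2, hb2, hct, hdt⟩ := hrest
  rcases hx with rfl | rfl | rfl | rfl | rfl | rfl | rfl | rfl | rfl | rfl | rfl |
    ⟨i, hi, rfl | rfl | rfl | rfl | rfl | rfl | rfl | rfl⟩ | ⟨i, -, rfl | rfl⟩ |
    ⟨i, hi, rfl | rfl⟩ | ⟨i, -, rfl | rfl | rfl | rfl | rfl | rfl⟩ <;>
  simp (disch := omega) [hcomm, ha1, hb1, ha2, hb2, hct, hdt, hcp, hdr, hc, hd, map_list_prod,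
    List.map_ofFn, Function.comp_def]

end Gen

/-- surjectivity half of the isomorphism of Lemma 3.3: there
is a surjective homomorphism `G(k,n,p,r) → ℤ/p × ℤ/r` sending `c₂ ↦ (1,0)`,
`d₂ ↦ (0,1)`, and all other generators to the identity. -/
theorem surj_hom_onto_zmod_prod (k n p r : ℕ) (hk : 2 ≤ k) :
    ∃ f : G k n p r →* Multiplicative (ZMod p × ZMod r),
      Function.Surjective f ∧
      f (gen k n p r (Gen.c ⟨1, by omega⟩)) = Multiplicative.ofAdd (1, 0) ∧
      f (gen k n p r (Gen.d ⟨1, by omega⟩)) = Multiplicative.ofAdd (0, 1) ∧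
      f (gen k n p r Gen.a1) = 1 ∧ f (gen k n p r Gen.b1) = 1 ∧
      f (gen k n p r Gen.a2) = 1 ∧ f (gen k n p r Gen.b2) = 1 ∧
      f (gen k n p r Gen.ct) = 1 ∧ f (gen k n p r Gen.dt) = 1 ∧
      ∀ i : Fin k, (i : ℕ) ≠ 1 →
        f (gen k n p r (Gen.c i)) = 1 ∧ f (gen k n p r (Gen.d i)) = 1 := by
  let f : G k n p r →* Multiplicative (ZMod p × ZMod r) :=
    PresentedGroup.toGroup fun _ => Gen.lift_toZModProd_eq_one_of_mem_rels p r n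
  have hf : ∀ g, f (gen k n p r g) = Gen.toZModProd p r g := fun _ => PresentedGroup.toGroup.of _
  have hc : f (gen k n p r (Gen.c ⟨1, by omega⟩)) = Multiplicative.ofAdd (1, 0) := hf _
  have hd : f (gen k n p r (Gen.d ⟨1, by omega⟩)) = Multiplicative.ofAdd (0, 1) := hf _
  refine ⟨f, f.surjective_of_map_eq_ofAdd_one_zero_of_map_eq_ofAdd_zero_one hc hd, hc, hd,
    hf _, hf _, hf _, hf _, hf _, hf _, fun i hi => ⟨?_, ?_⟩⟩ <;>
  simp [hf, Gen.toZModProd, hi]
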